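/- Assume that every C₃*-critical signed graph on fewer than n vertices Ĝ′ satisfies ρ(Ĝ′) ≤ 1, and let Ĝ be a C₃*-critical signed graph on n vertices with ρ(Ĝ) ≥ 2. If a 4-cycle C of Ĝ contains a vertex of degree 2, then C is negative. -/

import Mathlib

/-- A signed graph: a vertex type with a symmetric positive-edge relation and a
symmetric negative-edge relation (loops and "digons" are allowed). -/
structure SignedGraph (V : Type*) where
  pos : V → V → Prop
  neg : V → V → Prop
  pos_symm : Symmetric pos
  neg_symm : Symmetric neg

namespace SignedGraph

variable {V W : Type*}

/-- Switching at the vertex set `{v | s v = true}`: signs of edges with exactly one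
endpoint in the set are flipped; loops and edges with both or no endpoints in the
set are unchanged. -/
def switch (G : SignedGraph V) (s : V → Bool) : SignedGraph V where
  pos u v := if s u = s v then G.pos u v else G.neg u v
  neg u v := if s u = s v then G.neg u v else G.pos u v
  pos_symm := by
    intro u v h
    by_cases hs : s u = s v
    · rw [if_pos hs] at h; rw [if_pos hs.symm]; exact G.pos_symm h
    · rw [if_neg hs] at h; rw [if_neg (fun e => hs e.symm)]; exact G.neg_symm h
  neg_symm := by
    intro u v h
    by_cases hs : s u = s v
    · rw [if_pos hs] at h; rw [if_pos hs.symm]; exact G.neg_symm h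
    · rw [if_neg hs] at h; rw [if_neg (fun e => hs e.symm)]; exact G.pos_symm h

/-- An edge-sign preserving homomorphism maps positive edges to positive edges and
negative edges to negative edges. -/
def IsESPHom (G : SignedGraph V) (H : SignedGraph W) (φ : V → W) : Prop :=
  (∀ u v, G.pos u v → H.pos (φ u) (φ v)) ∧ (∀ u v, G.neg u v → H.neg (φ u) (φ v))

/-- A signed graph admits a homomorphism to another iff some switching of it admits
an edge-sign preserving homomorphism (this preserves adjacency and signs of closed
walks). -/
def HasHomTo (G : SignedGraph V) (H : SignedGraph W) : Prop :=
  ∃ (s : V → Bool) (φ : V → W), IsESPHom (G.switch s) H φ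

/-- `H` is a subgraph of `G` (on the same vertex set). -/
def IsSubgraph (H G : SignedGraph V) : Prop :=
  (∀ u v, H.pos u v → G.pos u v) ∧ (∀ u v, H.neg u v → G.neg u v)

/-- The number of edges of a finite signed graph (unordered pairs, each sign
counted separately). -/
noncomputable def edgeCount (G : SignedGraph V) : ℕ :=
  (Sym2.fromRel (r := G.pos) ⟨fun _ _ h => G.pos_symm h⟩).ncard +
    (Sym2.fromRel (r := G.neg) ⟨fun _ _ h => G.neg_symm h⟩).ncard

/-- The degree of a vertex: the number of its neighbours (via an edge of either sign). -/
noncomputable def degree (G : SignedGraph V) (v : V) : ℕ :=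
  {u | G.pos v u ∨ G.neg v u}.ncard

/-- The underlying simple graph of a signed graph (loops discarded). -/
def underlying (G : SignedGraph V) : SimpleGraph V :=
  SimpleGraph.fromRel (fun u v => G.pos u v ∨ G.neg u v)

end SignedGraph

/-- `C₃*`: the all-positive triangle with a negative loop at each vertex. -/
def C3star : SignedGraph (Fin 3) where
  pos u v := u ≠ v
  neg u v := u = v
  pos_symm := fun _ _ h => h.symm
  neg_symm := fun _ _ h => h.symm

/-- A signed graph is `C₃*`-critical: it has no digon and no positive loop (the
girth conditions of Definition 2.7), admits no homomorphism to `C₃*`, but every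
proper subgraph does. -/
def IsC3Critical {V : Type*} (G : SignedGraph V) : Prop :=
  (∀ u v, ¬ (G.pos u v ∧ G.neg u v)) ∧
  (∀ v, ¬ G.pos v v) ∧
  ¬ G.HasHomTo C3star ∧
  ∀ H : SignedGraph V, H.IsSubgraph G → H ≠ G → H.HasHomTo C3star

/-!
Deleting the edges at the `2`-vertex `a` leaves a proper subgraph, which therefore maps to `C₃*`.
Encode such a map as a switching `s` and a colouring `φ : V → Fin 3`, an edge `uv` of sign `t`
being monochromatic exactly when `t ⊕ s u ⊕ s v`. To extend it to `a` we choose `s a` and `φ a`;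
whether exactly one of the edges `ab`, `ad` is monochromatic is decided by
`t_ab ⊕ t_ad ⊕ s b ⊕ s d`, whatever `s a` is. If not, colour `a` differently from `b` and `d`.
If so, colour `a` like `b`, which needs `φ b ≠ φ d`: as the `4`-cycle is positive, exactly one of
`bc`, `cd` is monochromatic. The extension contradicts criticality.
-/

namespace SignedGraph

variable {V : Type*} {G : SignedGraph V}

/-- `true` stands for a negative edge. -/
def HasEdge (G : SignedGraph V) (t : Bool) (u v : V) : Prop :=
  if t then G.neg u v else G.pos u v

theorem HasEdge.symm {t : Bool} {u v : V} (h : G.HasEdge t u v) : G.HasEdge t v u := by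
  cases t
  exacts [G.pos_symm h, G.neg_symm h]

theorem HasEdge.pos_or_neg {t : Bool} {u v : V} (h : G.HasEdge t u v) :
    G.pos u v ∨ G.neg u v := by
  cases t
  exacts [Or.inl h, Or.inr h]

theorem HasEdge.sign_eq (hdigon : ∀ u v, ¬ (G.pos u v ∧ G.neg u v)) {t t' : Bool} {u v : V}
    (h : G.HasEdge t u v) (h' : G.HasEdge t' u v) : t = t' := by
  cases t <;> cases t'
  exacts [rfl, (hdigon u v ⟨h, h'⟩).elim, (hdigon u v ⟨h', h⟩).elim, rfl]

theorem eq_or_eq_of_degree_eq_two {a b d v : V} (hdeg : G.degree a = 2) (hbd : b ≠ d)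
    (hb : G.pos a b ∨ G.neg a b) (hd : G.pos a d ∨ G.neg a d) (hv : G.pos a v ∨ G.neg a v) :
    v = b ∨ v = d := by
  have hpair : ({b, d} : Set V) = {u | G.pos a u ∨ G.neg a u} := by
    refine Set.eq_of_subset_of_ncard_le (Set.pair_subset hb hd) ?_ ?_
    · rw [Set.ncard_pair hbd]; exact hdeg.le
    · exact Set.finite_of_ncard_ne_zero (by rw [← degree, hdeg]; decide)
  have hmem : v ∈ ({b, d} : Set V) := hpair ▸ hv
  simpa using hmem

def deleteIncidentEdges (G : SignedGraph V) (a : V) : SignedGraph V where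
  pos u v := G.pos u v ∧ a ≠ u ∧ a ≠ v
  neg u v := G.neg u v ∧ a ≠ u ∧ a ≠ v
  pos_symm := fun _ _ h => ⟨G.pos_symm h.1, h.2.2, h.2.1⟩
  neg_symm := fun _ _ h => ⟨G.neg_symm h.1, h.2.2, h.2.1⟩

theorem deleteIncidentEdges_isSubgraph (a : V) : (G.deleteIncidentEdges a).IsSubgraph G :=
  ⟨fun _ _ h => h.1, fun _ _ h => h.1⟩

theorem hasEdge_deleteIncidentEdges {a : V} {t : Bool} {u v : V} :
    (G.deleteIncidentEdges a).HasEdge t u v ↔ G.HasEdge t u v ∧ a ≠ u ∧ a ≠ v := by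
  cases t <;> rfl

theorem deleteIncidentEdges_ne {a v : V} {t : Bool} (h : G.HasEdge t a v) :
    G.deleteIncidentEdges a ≠ G := by
  intro hG
  rw [← hG, hasEdge_deleteIncidentEdges] at h
  exact h.2.1 rfl

/-- A homomorphism to `C₃*` through the switching `s`: an edge is sent onto a loop of `C₃*`
exactly when it is negative after switching. -/
def IsC3starHom (G : SignedGraph V) (s : V → Bool) (φ : V → Fin 3) : Prop :=
  ∀ t u v, G.HasEdge t u v → (φ u = φ v ↔ (t ^^ s u ^^ s v) = true)

theorem isESPHom_switch_C3star_iff {s : V → Bool} {φ : V → Fin 3} :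
    IsESPHom (G.switch s) C3star φ ↔ G.IsC3starHom s φ := by
  constructor
  · rintro ⟨hpos, hneg⟩ t u v h
    have hp := hpos u v
    have hn := hneg u v
    by_cases hs : s u = s v <;> cases t <;> simp_all [switch, HasEdge, C3star]
  · intro hφ
    constructor
    · intro u v h
      by_cases hs : s u = s v
      · simp only [switch, if_pos hs] at h
        simpa [C3star, hs] using hφ false u v h
      · simp only [switch, if_neg hs] at h
        simpa [C3star, hs] using hφ true u v h
    · intro u v h
      by_cases hs : s u = s v
      · simp only [switch, if_pos hs] at h
        simpa [C3star, hs] using hφ true u v h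
      · simp only [switch, if_neg hs] at h
        simpa [C3star, hs] using hφ false u v h

theorem hasHomTo_C3star_iff : G.HasHomTo C3star ↔ ∃ s φ, G.IsC3starHom s φ := by
  simp only [HasHomTo, isESPHom_switch_C3star_iff]

theorem isC3starHom_update [DecidableEq V] {a : V} {s : V → Bool} {φ : V → Fin 3} {β : Bool}
    {x : Fin 3} (hloop : ¬ G.pos a a)
    (hrest : ∀ t u v, a ≠ u → a ≠ v → G.HasEdge t u v → (φ u = φ v ↔ (t ^^ s u ^^ s v) = true))
    (hat : ∀ t v, a ≠ v → G.HasEdge t a v → (x = φ v ↔ (t ^^ β ^^ s v) = true)) :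
    G.IsC3starHom (Function.update s a β) (Function.update φ a x) := by
  intro t u v h
  rcases eq_or_ne a u with rfl | hu <;> rcases eq_or_ne a v with rfl | hv
  · cases t
    · exact absurd h hloop
    · simp
  · simpa [Function.update_of_ne hv.symm] using hat t v hv h
  · rw [Function.update_self, Function.update_of_ne hu.symm, Function.update_self,
      Function.update_of_ne hu.symm, eq_comm, Bool.xor_right_comm]
    exact hat t u hu h.symm
  · simpa [Function.update_of_ne hu.symm, Function.update_of_ne hv.symm] using hrest t u v hu hv h

end SignedGraph

theorem exists_extension_at_two_vertex (t₁ t₂ β₁ β₂ : Bool) (p₁ p₂ : Fin 3)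
    (hne : (t₁ ^^ t₂ ^^ β₁ ^^ β₂) = true → p₁ ≠ p₂) :
    ∃ (β : Bool) (x : Fin 3),
      (x = p₁ ↔ (t₁ ^^ β ^^ β₁) = true) ∧ (x = p₂ ↔ (t₂ ^^ β ^^ β₂) = true) := by
  by_cases hq : (t₁ ^^ t₂ ^^ β₁ ^^ β₂) = true
  · refine ⟨!(t₁ ^^ β₁), p₁, ?_, ?_⟩
    · cases t₁ <;> cases β₁ <;> simp
    · simp only [hne hq, false_iff]
      revert hq; cases t₁ <;> cases t₂ <;> cases β₁ <;> cases β₂ <;> decide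
  · have havoid : ∀ p q : Fin 3, ∃ x, x ≠ p ∧ x ≠ q := by decide
    obtain ⟨x, hx₁, hx₂⟩ := havoid p₁ p₂
    refine ⟨t₁ ^^ β₁, x, ?_, ?_⟩
    · cases t₁ <;> cases β₁ <;> simpa using hx₁
    · simp only [hx₂, false_iff]
      revert hq; cases t₁ <;> cases t₂ <;> cases β₁ <;> cases β₂ <;> decide

theorem ne_of_eq_iff_of_eq_iff {α : Type*} {p q r : α} {A B : Bool} (hpq : p = q ↔ A = true)
    (hqr : q = r ↔ B = true) (hAB : (A ^^ B) = true) : p ≠ r := by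
  cases A <;> cases B <;> simp_all

theorem four_cycle_through_two_vertex_is_negative_general {V : Type*}
    (G : SignedGraph V)
    (hcrit : IsC3Critical G)
    (a b c d : V)
    (hab : a ≠ b) (hac : a ≠ c) (had : a ≠ d) (hbd : b ≠ d)
    (s1 s2 s3 s4 : Bool)
    (e1 : if s1 then G.neg a b else G.pos a b)
    (e2 : if s2 then G.neg b c else G.pos b c)
    (e3 : if s3 then G.neg c d else G.pos c d)
    (e4 : if s4 then G.neg d a else G.pos d a)
    (hdeg : G.degree a = 2) :
    ¬ Even (s1.toNat + s2.toNat + s3.toNat + s4.toNat) := by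
  intro hEven
  classical
  obtain ⟨hdigon, hloop, hnohom, hsub⟩ := hcrit
  have hcycle : (s1 ^^ s2 ^^ s3 ^^ s4) = false := by
    revert hEven; cases s1 <;> cases s2 <;> cases s3 <;> cases s4 <;> decide
  have eab : G.HasEdge s1 a b := e1
  have eda : G.HasEdge s4 d a := e4
  have ead := eda.symm
  obtain ⟨s, φ, hφ⟩ := SignedGraph.hasHomTo_C3star_iff.1 <|
    hsub _ (G.deleteIncidentEdges_isSubgraph a) (SignedGraph.deleteIncidentEdges_ne eab)
  have hrest : ∀ t u v, a ≠ u → a ≠ v → G.HasEdge t u v →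
      (φ u = φ v ↔ (t ^^ s u ^^ s v) = true) :=
    fun t u v hu hv h => hφ t u v (SignedGraph.hasEdge_deleteIncidentEdges.2 ⟨h, hu, hv⟩)
  have hbd_ne : (s1 ^^ s4 ^^ s b ^^ s d) = true → φ b ≠ φ d := fun hq =>
    ne_of_eq_iff_of_eq_iff (hrest s2 b c hab hac e2) (hrest s3 c d hac had e3)
      (by simp_all [Bool.xor_left_comm, Bool.xor_comm])
  obtain ⟨β, x, hxb, hxd⟩ := exists_extension_at_two_vertex s1 s4 (s b) (s d) (φ b) (φ d) hbd_ne
  refine hnohom (SignedGraph.hasHomTo_C3star_iff.2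
    ⟨_, _, G.isC3starHom_update (β := β) (x := x) (hloop a) hrest fun t v _ h => ?_⟩)
  rcases G.eq_or_eq_of_degree_eq_two hdeg hbd eab.pos_or_neg ead.pos_or_neg h.pos_or_neg
    with rfl | rfl
  · rwa [h.sign_eq hdigon eab]
  · rwa [h.sign_eq hdigon ead]

/-- Suppose every `C₃*`-critical signed graph on fewer vertices has potential
`ρ = 3v − 2e ≤ 1`, and `Ĝ` is a `C₃*`-critical signed graph with `ρ(Ĝ) ≥ 2`. If a
`4`-cycle `a b c d` of `Ĝ` (with edge signs `s₁,…,s₄`, `true` = negative) contains a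
vertex `a` of degree `2`, then the cycle is negative (it has an odd number of
negative edges). -/
theorem four_cycle_through_two_vertex_is_negative {V : Type*} [Fintype V]
    (G : SignedGraph V)
    (hmin : ∀ m : ℕ, m < Fintype.card V → ∀ G' : SignedGraph (Fin m),
      IsC3Critical G' → 3 * (m : ℤ) - 2 * (G'.edgeCount : ℤ) ≤ 1)
    (hcrit : IsC3Critical G)
    (hpot : 2 ≤ 3 * (Fintype.card V : ℤ) - 2 * (G.edgeCount : ℤ))
    (a b c d : V)
    (hab : a ≠ b) (hac : a ≠ c) (had : a ≠ d) (hbc : b ≠ c) (hbd : b ≠ d)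
    (hcd : c ≠ d)
    (s1 s2 s3 s4 : Bool)
    (e1 : if s1 then G.neg a b else G.pos a b)
    (e2 : if s2 then G.neg b c else G.pos b c)
    (e3 : if s3 then G.neg c d else G.pos c d)
    (e4 : if s4 then G.neg d a else G.pos d a)
    (hdeg : G.degree a = 2) :
    ¬ Even (s1.toNat + s2.toNat + s3.toNat + s4.toNat) :=
  four_cycle_through_two_vertex_is_negative_general G hcrit a b c d hab hac had hbd s1 s2 s3 s4 e1
    e2 e3 e4 hdeg
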